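/- Suppose all entries of all matrices in a finite set 𝒜 ⊂ SL₂(ℝ) are algebraic numbers. Then 𝒜 is Diophantine: there exists c > 0 such that for all n and all A₁,…,Aₙ, A'₁,…,A'ₙ ∈ 𝒜, if A₁⋯Aₙ ≠ A'₁⋯A'ₙ then ‖A₁⋯Aₙ − A'₁⋯A'ₙ‖ > cⁿ. -/

import Mathlib

open Matrix

/-- The Frobenius norm of a `2×2` real matrix (any fixed matrix norm works). -/
noncomputable def mnorm (M : Matrix (Fin 2) (Fin 2) ℝ) : ℝ :=
  Real.sqrt (∑ i : Fin 2, ∑ j : Fin 2, (M i j) ^ 2)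

/-!
Let `K` be the number field generated by the entries and `d` a common denominator for them.
For two products of length `n`, `dⁿ` times the difference of corresponding entries is an
algebraic integer of `K`, and each of its conjugates is at most `Hⁿ` for a constant `H`, since
entries of products grow at most geometrically under every complex embedding. Being nonzero,
its norm over `ℚ` is a nonzero integer, so its absolute value at the real embedding is at least
`(Hⁿ)^-([K:ℚ]-1)`.
-/

open Module

theorem abs_apply_le_mnorm (M : Matrix (Fin 2) (Fin 2) ℝ) (i j : Fin 2) :
    |M i j| ≤ mnorm M := by
  rw [← Real.sqrt_sq_eq_abs]
  refine Real.sqrt_le_sqrt ?_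
  calc M i j ^ 2 ≤ ∑ j', M i j' ^ 2 :=
        Finset.single_le_sum (fun k _ => sq_nonneg (M i k)) (Finset.mem_univ j)
    _ ≤ ∑ i', ∑ j', M i' j' ^ 2 :=
        Finset.single_le_sum (fun k _ => Finset.sum_nonneg fun l _ => sq_nonneg (M k l))
          (Finset.mem_univ i)

theorem List.prod_ofFn_smul {R A : Type*} [CommMonoid R] [Monoid A] [MulAction R A]
    [IsScalarTower R A A] [SMulCommClass R A A] (r : R) {n : ℕ} (f : Fin n → A) :
    (List.ofFn fun k => r • f k).prod = r ^ n • (List.ofFn f).prod := by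
  induction n with
  | zero => simp
  | succ n ih => simp [List.ofFn_succ, ih, smul_mul_smul_comm, pow_succ']

section

variable {ι : Type*} [Fintype ι] [DecidableEq ι]

variable (ι) in
/-- The Diophantine property of the paper, read entrywise, with `f` measuring differences. -/
def DiophantineEntries {R : Type*} [Ring R] (f : R → ℝ) (s : Set R) : Prop :=
  ∃ c > 0, ∀ n (A B : Fin n → Matrix ι ι R), (∀ k, A k ∈ s.matrix) → (∀ k, B k ∈ s.matrix) →
    ∀ i j, (List.ofFn A).prod i j ≠ (List.ofFn B).prod i j →
      c ^ n ≤ f ((List.ofFn A).prod i j - (List.ofFn B).prod i j)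

theorem DiophantineEntries.map {R S : Type*} [Ring R] [Ring S] {f : R → ℝ} {g : S → ℝ}
    {s : Set R} {t : Set S} (h : DiophantineEntries ι f s) (φ : R →+* S)
    (hfg : ∀ x, g (φ x) = f x) (hts : t ⊆ φ '' s) : DiophantineEntries ι g t := by
  obtain ⟨c, hc, hsep⟩ := h
  refine ⟨c, hc, fun n A B hA hB i j hne => ?_⟩
  have hlift : ∀ C : Fin n → Matrix ι ι S, (∀ k, C k ∈ t.matrix) →
      ∃ C' : Fin n → Matrix ι ι R, (∀ k, C' k ∈ s.matrix) ∧
        φ.mapMatrix (List.ofFn C').prod = (List.ofFn C).prod := by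
    intro C hC
    choose C' hC's hC'eq using fun k i j => hts (hC k i j)
    refine ⟨fun k => Matrix.of (C' k), hC's, ?_⟩
    have hmap : (φ.mapMatrix ∘ fun k => Matrix.of (C' k)) = C := by
      funext k
      ext i j
      exact hC'eq k i j
    rw [map_list_prod, List.map_ofFn, hmap]
  obtain ⟨A', hA's, hA'⟩ := hlift A hA
  obtain ⟨B', hB's, hB'⟩ := hlift B hB
  rw [← hA', ← hB'] at hne ⊢
  simp only [RingHom.mapMatrix_apply, map_apply] at hne ⊢
  rw [← map_sub, hfg]
  exact hsep n A' B' hA's hB's i j fun h => hne (by rw [h])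

end

namespace NumberField

variable {K : Type*} [Field K] [NumberField K]

theorem one_le_norm_embedding_mul_house_pow {α : K} (hα : IsIntegral ℤ α) (hα0 : α ≠ 0)
    (σ : K →+* ℂ) : 1 ≤ ‖σ α‖ * house α ^ (finrank ℚ K - 1) := by
  refine le_trans ?_ (norm_norm_le_norm_mul_house_pow α σ)
  obtain ⟨a, rfl⟩ : ∃ a : 𝓞 K, (a : K) = α := ⟨⟨α, hα⟩, rfl⟩
  have hnorm : Algebra.norm ℤ a ≠ 0 :=
    Algebra.norm_ne_zero_iff.mpr fun h => hα0 (by simp [h])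
  rw [← Algebra.coe_norm_int, Int.norm_cast_rat, Int.norm_eq_abs]
  exact_mod_cast Int.one_le_abs hnorm

theorem house_sub_le (α β : K) : house (α - β) ≤ house α + house β := by
  simpa only [house, map_sub] using norm_sub_le _ _

theorem house_list_prod_apply_le {ι : Type*} [Fintype ι] [DecidableEq ι]
    {l : List (Matrix ι ι K)} {M : ℝ} (hl : ∀ A ∈ l, ∀ i j, house (A i j) ≤ M) (i j : ι) :
    house (l.prod i j) ≤ (Fintype.card ι * M) ^ l.length := by
  induction l generalizing i j with
  | nil =>
    rw [List.prod_nil, one_apply]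
    split_ifs
    · rw [← Int.cast_one, house_intCast]; simp
    · rw [← Int.cast_zero, house_intCast]; simp
  | cons A l ih =>
    have hA := hl A List.mem_cons_self
    rw [List.prod_cons, mul_apply, List.length_cons, pow_succ']
    calc house (∑ k, A i k * l.prod k j) ≤ ∑ k, house (A i k) * house (l.prod k j) :=
          (house_sum_le_sum_house _ _).trans (Finset.sum_le_sum fun k _ => house_mul_le _ _)
      _ ≤ ∑ _k : ι, M * (Fintype.card ι * M) ^ l.length :=
          Finset.sum_le_sum fun k _ => mul_le_mul (hA i k)
            (ih (fun B hB => hl B (List.mem_cons_of_mem _ hB)) k j) (house_nonneg _)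
            ((house_nonneg _).trans (hA i k))
      _ = Fintype.card ι * M * (Fintype.card ι * M) ^ l.length := by
          rw [Finset.sum_const, Finset.card_univ, nsmul_eq_mul, mul_assoc]

variable {ι : Type*} [Fintype ι] [DecidableEq ι]

theorem diophantineEntries_of_isIntegral (σ : K →+* ℂ) {s : Set K} (hs : s.Finite)
    (hint : ∀ a ∈ s, IsIntegral ℤ a) : DiophantineEntries ι (‖σ ·‖) s := by
  set M := ∑ a ∈ hs.toFinset, house a
  have hM : ∀ a ∈ s, house a ≤ M := fun a ha =>
    Finset.single_le_sum (fun b _ => house_nonneg b) (hs.mem_toFinset.2 ha)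
  have hM0 : 0 ≤ M := Finset.sum_nonneg fun b _ => house_nonneg b
  set H := max 1 (2 * Fintype.card ι * M)
  have hH : 1 ≤ H := le_max_left _ _
  refine ⟨(H ^ (finrank ℚ K - 1))⁻¹, by positivity, fun n A B hA hB i j hne => ?_⟩
  obtain _ | n := n
  · simp at hne
  have hprod : ∀ C : Fin (n + 1) → Matrix ι ι K, (∀ k, C k ∈ s.matrix) →
      IsIntegral ℤ ((List.ofFn C).prod i j) ∧
        house ((List.ofFn C).prod i j) ≤ (Fintype.card ι * M) ^ (n + 1) := by
    intro C hC
    refine ⟨?_, ?_⟩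
    · have : (List.ofFn C).prod ∈ (integralClosure ℤ K).matrix :=
        list_prod_mem (List.forall_mem_ofFn_iff.2 fun k i j => hint _ (hC k i j))
      exact this i j
    · simpa using house_list_prod_apply_le (l := List.ofFn C)
        (List.forall_mem_ofFn_iff.2 fun k i j => hM _ (hC k i j)) i j
  obtain ⟨hAint, hAle⟩ := hprod A hA
  obtain ⟨hBint, hBle⟩ := hprod B hB
  set x := (List.ofFn A).prod i j - (List.ofFn B).prod i j
  have hhouse : house x ≤ H ^ (n + 1) :=
    calc house x ≤ house ((List.ofFn A).prod i j) + house ((List.ofFn B).prod i j) :=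
          house_sub_le _ _
      _ ≤ 2 ^ (n + 1) * (Fintype.card ι * M) ^ (n + 1) := by
          have : (2 : ℝ) ≤ 2 ^ (n + 1) := by
            simpa using pow_le_pow_right₀ one_le_two (Nat.succ_pos n)
          nlinarith [house_nonneg ((List.ofFn A).prod i j)]
      _ = (2 * Fintype.card ι * M) ^ (n + 1) := by ring
      _ ≤ H ^ (n + 1) := pow_le_pow_left₀ (by positivity) (le_max_right _ _) _
  have key := one_le_norm_embedding_mul_house_pow (hAint.sub hBint) (sub_ne_zero.2 hne) σ
  calc ((H ^ (finrank ℚ K - 1))⁻¹) ^ (n + 1) = ((H ^ (n + 1)) ^ (finrank ℚ K - 1))⁻¹ := by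
        rw [inv_pow, ← pow_mul, ← pow_mul, mul_comm]
    _ ≤ ‖σ x‖ := by
        rw [inv_le_iff_one_le_mul₀ (by positivity)]
        exact key.trans (by gcongr; exact house_nonneg _)

theorem diophantineEntries_of_finite (σ : K →+* ℂ) {s : Set K} (hs : s.Finite) :
    DiophantineEntries ι (‖σ ·‖) s := by
  obtain ⟨d, hd0, hd⟩ := exists_integral_multiples ℤ ℚ hs.toFinset
  obtain ⟨c, hc, hsep⟩ := diophantineEntries_of_isIntegral (ι := ι) σ (hs.image (d • ·))
    (by rintro _ ⟨a, ha, rfl⟩; exact hd a (hs.mem_toFinset.2 ha))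
  refine ⟨c / |d|, by positivity, fun n A B hA hB i j hne => ?_⟩
  have hscale : ∀ C : Fin n → Matrix ι ι K,
      (List.ofFn fun k => d • C k).prod i j = d ^ n • (List.ofFn C).prod i j := by
    intro C
    rw [List.prod_ofFn_smul, Matrix.smul_apply]
  have := hsep n (fun k => d • A k) (fun k => d • B k)
    (fun k i j => ⟨A k i j, hA k i j, rfl⟩) (fun k i j => ⟨B k i j, hB k i j, rfl⟩) i j
    (by rw [hscale, hscale]; exact (smul_right_injective K (pow_ne_zero n hd0)).ne hne)
  beta_reduce at this ⊢
  rw [hscale, hscale, ← smul_sub, zsmul_eq_mul, map_mul, map_intCast, norm_mul,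
    Complex.norm_intCast] at this
  rw [div_pow, div_le_iff₀ (by positivity)]
  push_cast at this ⊢
  rwa [abs_pow, mul_comm] at this

end NumberField

theorem diophantineEntries_abs_of_isAlgebraic {ι : Type*} [Fintype ι] [DecidableEq ι]
    {T : Set ℝ} (hT : T.Finite) (halg : ∀ x ∈ T, IsAlgebraic ℚ x) : DiophantineEntries ι (fun x => |x|) T := by
  have := hT.to_subtype
  let K := IntermediateField.adjoin ℚ T
  have : FiniteDimensional ℚ K :=
    IntermediateField.finiteDimensional_adjoin fun x hx => (halg x hx).isIntegral
  have : NumberField K := ⟨⟩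
  let φ := algebraMap K ℝ
  refine (NumberField.diophantineEntries_of_finite (Complex.ofRealHom.comp φ)
    (hT.preimage φ.injective.injOn)).map φ (fun x => ?_) fun x hx => ?_
  · simp
  · exact ⟨⟨x, IntermediateField.subset_adjoin ℚ T hx⟩, hx, rfl⟩

theorem algebraic_entries_implies_diophantine
    (𝒜 : Finset (Matrix (Fin 2) (Fin 2) ℝ))
    (halg : ∀ A ∈ 𝒜, ∀ i j, IsAlgebraic ℚ (A i j)) :
    ∃ c > (0 : ℝ), ∀ n : ℕ, ∀ A B : Fin n → Matrix (Fin 2) (Fin 2) ℝ,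
      (∀ i, A i ∈ 𝒜) → (∀ i, B i ∈ 𝒜) →
      (List.ofFn A).prod ≠ (List.ofFn B).prod →
      c ^ n < mnorm ((List.ofFn A).prod - (List.ofFn B).prod) := by
  set T : Set ℝ := ⋃ A ∈ 𝒜, Set.range fun p : Fin 2 × Fin 2 => A p.1 p.2
  have hT : ∀ A ∈ 𝒜, A ∈ T.matrix := fun A hA i j => Set.mem_biUnion hA ⟨(i, j), rfl⟩
  have hTfin : T.Finite := 𝒜.finite_toSet.biUnion fun A _ => Set.finite_range _
  have hTalg : ∀ x ∈ T, IsAlgebraic ℚ x := by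
    simp only [T, Set.mem_iUnion, Set.mem_range]
    rintro _ ⟨A, hA, ⟨i, j⟩, rfl⟩
    exact halg A hA i j
  obtain ⟨c, hc, hsep⟩ := diophantineEntries_abs_of_isAlgebraic (ι := Fin 2) hTfin hTalg
  refine ⟨c / 2, by positivity, fun n A B hA hB hne => ?_⟩
  obtain ⟨i, j, hij⟩ : ∃ i j, (List.ofFn A).prod i j ≠ (List.ofFn B).prod i j := by
    by_contra! h
    exact hne (Matrix.ext h)
  have hn : n ≠ 0 := by
    rintro rfl
    simp at hij
  calc (c / 2) ^ n < c ^ n := pow_lt_pow_left₀ (half_lt_self hc) (by positivity) hn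
    _ ≤ |(List.ofFn A).prod i j - (List.ofFn B).prod i j| :=
        hsep n A B (fun k => hT _ (hA k)) (fun k => hT _ (hB k)) i j hij
    _ ≤ _ := abs_apply_le_mnorm ((List.ofFn A).prod - (List.ofFn B).prod) i j
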